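/- Let P₁ and P₂ be rank-one orthogonal projections on a finite-dimensional complex Hilbert space with 0 < Tr(P₁P₂) < 1, and let ρ = ½P₁ + ½P₂. Under the MKC product-measure construction treating P₁ and P₂ as lying in distinct (totally incompatible) contexts, ℙ_ρ[λ(P₁)=1 and λ(P₂)=1] = (½ + ½Tr(P₁P₂))², which differs from ½ℙ_{P₁}[λ(P₁)=1, λ(P₂)=1] + ½ℙ_{P₂}[λ(P₁)=1, λ(P₂)=1] = Tr(P₁P₂). Hence ℙ_ρ ≠ ½ℙ_{P₁} + ½ℙ_{P₂}. -/

import Mathlib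

/-- The rank-one orthogonal projection onto the span of a unit vector `v`. -/
noncomputable def rankOne {n : ℕ} (v : EuclideanSpace ℂ (Fin n)) :
    EuclideanSpace ℂ (Fin n) →ₗ[ℂ] EuclideanSpace ℂ (Fin n) :=
  ((innerSL ℂ v).smulRight v).toLinearMap

/-- The MKC joint probability that both `P₁` and `P₂` (lying in distinct totally
incompatible contexts) take the value `1` in state `σ`: the product of the two
Born probabilities. -/
noncomputable def mkcJoint {n : ℕ}
    (σ P₁ P₂ : EuclideanSpace ℂ (Fin n) →ₗ[ℂ] EuclideanSpace ℂ (Fin n)) : ℝ :=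
  (LinearMap.trace ℂ _ (σ * P₁)).re * (LinearMap.trace ℂ _ (σ * P₂)).re

/-! Since `Tr(σ ∘ |v⟩⟨v|) = ⟨v, σ v⟩`, every Born probability involved is explicit:
`Tr(P₁P₁) = Tr(P₂P₂) = 1` and `Tr(P₁P₂) = Tr(P₂P₁) = |⟨v, w⟩|² = t`, so `Tr(ρPᵢ) = ½ + ½t`.
The MKC product for `ρ` is therefore `(½ + ½t)²`, while the mixture of the products for
`P₁` and `P₂` is `t`; these differ because `(½ + ½t)² - t = ¼(1 - t)²` vanishes only at `t = 1`. -/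

open LinearMap

variable {n : ℕ}

lemma rankOne_apply (v x : EuclideanSpace ℂ (Fin n)) : rankOne v x = inner ℂ v x • v := rfl

lemma trace_mul_rankOne (σ : EuclideanSpace ℂ (Fin n) →ₗ[ℂ] EuclideanSpace ℂ (Fin n))
    (v : EuclideanSpace ℂ (Fin n)) : trace ℂ _ (σ * rankOne v) = inner ℂ v (σ v) := by
  have : σ * rankOne v = (innerSL ℂ v : EuclideanSpace ℂ (Fin n) →ₗ[ℂ] ℂ).smulRight (σ v) := by
    ext x; simp [rankOne_apply]
  rw [this, trace_smulRight, ContinuousLinearMap.coe_coe, innerSL_apply_apply]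

lemma trace_rankOne_mul_rankOne (v w : EuclideanSpace ℂ (Fin n)) :
    trace ℂ _ (rankOne v * rankOne w) = (‖inner ℂ v w‖ ^ 2 : ℝ) := by
  rw [trace_mul_rankOne, rankOne_apply, inner_smul_right, ← inner_conj_symm w v,
    Complex.mul_conj', Complex.ofReal_pow]

lemma trace_rankOne_mul_self {v : EuclideanSpace ℂ (Fin n)} (hv : ‖v‖ = 1) :
    trace ℂ _ (rankOne v * rankOne v) = 1 := by
  rw [trace_rankOne_mul_rankOne, inner_self_eq_norm_sq_to_K, hv]; simp

lemma half_add_half_mul_sq_ne {t : ℝ} (ht : t ≠ 1) : (1/2 + 1/2 * t) ^ 2 ≠ t :=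
  fun h ↦ ht (by nlinarith [sq_nonneg (1 - t)])

theorem mkc_preparation_noncontextuality_convexity_failure_general {n : ℕ}
    (v w : EuclideanSpace ℂ (Fin n)) (hv : ‖v‖ = 1) (hw : ‖w‖ = 1)
    (P₁ P₂ ρ : EuclideanSpace ℂ (Fin n) →ₗ[ℂ] EuclideanSpace ℂ (Fin n))
    (hP₁ : P₁ = rankOne v) (hP₂ : P₂ = rankOne w)
    (t : ℝ) (ht : t = (LinearMap.trace ℂ _ (P₁ * P₂)).re)
    (ht1 : t < 1)
    (hρ : ρ = (1/2 : ℂ) • P₁ + (1/2 : ℂ) • P₂) :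
    mkcJoint ρ P₁ P₂ = (1/2 + 1/2 * t)^2 ∧
    (1/2 : ℝ) * mkcJoint P₁ P₁ P₂ + (1/2 : ℝ) * mkcJoint P₂ P₁ P₂ = t ∧
    mkcJoint ρ P₁ P₂ ≠
      (1/2 : ℝ) * mkcJoint P₁ P₁ P₂ + (1/2 : ℝ) * mkcJoint P₂ P₁ P₂ := by
  have h₁₂ : trace ℂ _ (P₁ * P₂) = t := by
    rw [ht, hP₁, hP₂, trace_rankOne_mul_rankOne, Complex.ofReal_re]
  have h₂₁ : trace ℂ _ (P₂ * P₁) = t := by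
    rw [trace_mul_comm, h₁₂]
  have h₁₁ : trace ℂ _ (P₁ * P₁) = 1 := hP₁ ▸ trace_rankOne_mul_self hv
  have h₂₂ : trace ℂ _ (P₂ * P₂) = 1 := hP₂ ▸ trace_rankOne_mul_self hw
  have hmix : ∀ P, trace ℂ _ (ρ * P) = 1/2 * trace ℂ _ (P₁ * P) + 1/2 * trace ℂ _ (P₂ * P) := by
    intro P; simp only [hρ, add_mul, smul_mul_assoc, map_add, map_smul, smul_eq_mul]
  have hρ_joint : mkcJoint ρ P₁ P₂ = (1/2 + 1/2 * t) ^ 2 := by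
    norm_num [mkcJoint, hmix, h₁₁, h₁₂, h₂₁, h₂₂]
    ring
  have hmix_joint : (1/2 : ℝ) * mkcJoint P₁ P₁ P₂ + (1/2 : ℝ) * mkcJoint P₂ P₁ P₂ = t := by
    norm_num [mkcJoint, h₁₁, h₁₂, h₂₁, h₂₂]
    ring
  refine ⟨hρ_joint, hmix_joint, ?_⟩
  rw [hρ_joint, hmix_joint]
  exact half_add_half_mul_sq_ne ht1.ne

/-- Failure of convexity of the MKC measures: for rank-one projections `P₁, P₂`
with `0 < Tr(P₁P₂) < 1` and `ρ = ½P₁ + ½P₂`, the MKC joint probability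
`ℙ_ρ[λ(P₁)=1, λ(P₂)=1]` equals `(½ + ½Tr(P₁P₂))²`, whereas the convex combination
`½ℙ_{P₁}[…] + ½ℙ_{P₂}[…]` equals `Tr(P₁P₂)`, and these differ; hence
`ℙ_ρ ≠ ½ℙ_{P₁} + ½ℙ_{P₂}`. -/
theorem mkc_preparation_noncontextuality_convexity_failure {n : ℕ}
    (v w : EuclideanSpace ℂ (Fin n)) (hv : ‖v‖ = 1) (hw : ‖w‖ = 1)
    (P₁ P₂ ρ : EuclideanSpace ℂ (Fin n) →ₗ[ℂ] EuclideanSpace ℂ (Fin n))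
    (hP₁ : P₁ = rankOne v) (hP₂ : P₂ = rankOne w)
    (t : ℝ) (ht : t = (LinearMap.trace ℂ _ (P₁ * P₂)).re)
    (ht0 : 0 < t) (ht1 : t < 1)
    (hρ : ρ = (1/2 : ℂ) • P₁ + (1/2 : ℂ) • P₂) :
    mkcJoint ρ P₁ P₂ = (1/2 + 1/2 * t)^2 ∧
    (1/2 : ℝ) * mkcJoint P₁ P₁ P₂ + (1/2 : ℝ) * mkcJoint P₂ P₁ P₂ = t ∧
    mkcJoint ρ P₁ P₂ ≠
      (1/2 : ℝ) * mkcJoint P₁ P₁ P₂ + (1/2 : ℝ) * mkcJoint P₂ P₁ P₂ :=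
  mkc_preparation_noncontextuality_convexity_failure_general v w hv hw P₁ P₂ ρ hP₁ hP₂ t ht ht1 hρ
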